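/- Let 𝒢 be a second countable locally compact Hausdorff étale groupoid and F: 𝒢 → ℂ a continuous positive definite function with F ∈ B_{0,l}(𝒢). Then the GNS representation π_F associated to F is a B_{0,l}(𝒢)-representation: for all f,g in the fundamental sequence (given by a sup-norm dense sequence in C_c(𝒢)), the matrix coefficient x ↦ ⟨π_F(x)σ(f)(s(x)), σ(g)(r(x))⟩ equals (conj(g) * F * conj(f)*)(x) and lies in B_{0,l}(𝒢). -/

import Mathlib

open scoped BigOperators ComplexConjugate ENNReal NNReal
open MeasureTheory Filter Topology

noncomputable section

instance : Fact ((1 : ℝ≥0∞) ≤ 2) := ⟨one_le_two⟩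

/-- The ambient separable Hilbert space `ℓ²(ℕ, ℂ)`, in which the fibres of any
Borel Hilbert bundle with a fundamental sequence may be realized. -/
abbrev Hamb : Type := lp (fun _ : ℕ => ℂ) 2

instance : MeasurableSpace Hamb := borel _
instance : BorelSpace Hamb := ⟨rfl⟩

/-- A bounded complex-valued function. -/
def BddFun {X : Type} (f : X → ℂ) : Prop := ∃ M : ℝ, ∀ x, ‖f x‖ ≤ M

/-- A (second countable locally compact Hausdorff) étale groupoid: a groupoid structure
on `G` (with total operations, the product being meaningful on composable pairs
`s x = r y`), such that inversion and multiplication are continuous and the range map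
is a local homeomorphism.  The standing topological assumptions (Hausdorff, second
countable, locally compact) are imposed as typeclass assumptions in the theorems. -/
structure EtaleGroupoid (G : Type) [TopologicalSpace G] where
  mul : G → G → G
  inv : G → G
  r : G → G
  s : G → G
  r_def : ∀ x, r x = mul x (inv x)
  s_def : ∀ x, s x = mul (inv x) x
  inv_inv : ∀ x, inv (inv x) = x
  s_inv : ∀ x, s (inv x) = r x
  mul_assoc' : ∀ x y z, s x = r y → s y = r z → mul (mul x y) z = mul x (mul y z)
  r_mul : ∀ x y, s x = r y → r (mul x y) = r x
  s_mul : ∀ x y, s x = r y → s (mul x y) = s y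
  inv_mul_cancel' : ∀ x y, s x = r y → mul (inv x) (mul x y) = y
  mul_inv_cancel' : ∀ x y, s x = r y → mul (mul x y) (inv y) = x
  continuous_inv : Continuous inv
  continuous_r : Continuous r
  continuous_s : Continuous s
  continuous_mul : ∀ x y : G, s x = r y → ∀ W : Set G, IsOpen W → mul x y ∈ W →
    ∃ U V : Set G, IsOpen U ∧ IsOpen V ∧ x ∈ U ∧ y ∈ V ∧
      ∀ x' ∈ U, ∀ y' ∈ V, s x' = r y' → mul x' y' ∈ W
  etale : ∀ x : G, ∃ U : Set G, IsOpen U ∧ x ∈ U ∧ Set.InjOn r U ∧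
    ∀ V : Set G, V ⊆ U → IsOpen V → IsOpen (r '' V)

namespace EtaleGroupoid

variable {G : Type} [TopologicalSpace G] [MeasurableSpace G]

/-- The unit space `𝒢⁽⁰⁾`. -/
def units (g : EtaleGroupoid G) : Set G := Set.range g.r

/-- The range fibre `𝒢^u = r⁻¹(u)`. -/
def rFiber (g : EtaleGroupoid G) (u : G) : Set G := {x | g.r x = u}

/-- The source fibre `𝒢_u = s⁻¹(u)`. -/
def sFiber (g : EtaleGroupoid G) (u : G) : Set G := {x | g.s x = u}

/-- Membership in `C_c(𝒢)`: continuous with compact support. -/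
def IsCc (_g : EtaleGroupoid G) (f : G → ℂ) : Prop := Continuous f ∧ HasCompactSupport f

/-- Convolution: `(f * h)(x) = Σ_{y ∈ 𝒢^{r(x)}} f(y) h(y⁻¹ x)`. -/
def conv (g : EtaleGroupoid G) (f h : G → ℂ) : G → ℂ :=
  fun x => ∑' y : g.rFiber (g.r x), f (y : G) * h (g.mul (g.inv (y : G)) x)

/-- The involution `f^*(x) = conj (f (x⁻¹))`. -/
def star' (g : EtaleGroupoid G) (f : G → ℂ) : G → ℂ := fun x => conj (f (g.inv x))

/-- Iterated convolution powers: `convIter g h n = h^{*(n+1)}`. -/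
def convIter (g : EtaleGroupoid G) (h : G → ℂ) : ℕ → G → ℂ
  | 0 => h
  | n + 1 => g.conv (convIter g h n) h

/-- `B(𝒢)`: bounded Borel functions. -/
def BG (_g : EtaleGroupoid G) : Set (G → ℂ) := {f | Measurable f ∧ BddFun f}

/-- `B_c(𝒢)`: compactly supported bounded Borel functions. -/
def Bc (_g : EtaleGroupoid G) : Set (G → ℂ) :=
  {f | Measurable f ∧ BddFun f ∧ HasCompactSupport f}

/-- `B_{0,l}(𝒢)`: bounded Borel functions which are locally `B₀`, i.e. whose
restriction to `𝒢(K)` vanishes at infinity for every compact `K ⊆ 𝒢⁽⁰⁾`. -/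
def B0l (g : EtaleGroupoid G) : Set (G → ℂ) :=
  {f | Measurable f ∧ BddFun f ∧
    ∀ K : Set G, K ⊆ g.units → IsCompact K → ∀ ε : ℝ, 0 < ε →
      ∃ C : Set G, IsCompact C ∧ ∀ x : G, g.r x ∈ K → g.s x ∈ K → x ∉ C → ‖f x‖ < ε}

/-- An algebraic ideal `D ⊴ B(𝒢)`. -/
structure IsBorelIdeal (g : EtaleGroupoid G) (D : Set (G → ℂ)) : Prop where
  subset_BG : D ⊆ g.BG
  add_mem : ∀ f ∈ D, ∀ h ∈ D, f + h ∈ D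
  smul_mem : ∀ f ∈ D, ∀ c : ℂ, c • f ∈ D
  mul_mem : ∀ f ∈ D, ∀ h ∈ g.BG, h * f ∈ D

/-- A positive definite function on the groupoid. -/
def IsPosDef (g : EtaleGroupoid G) (F : G → ℂ) : Prop :=
  ∀ u ∈ g.units, ∀ n : ℕ, ∀ x : Fin n → G, (∀ i, x i ∈ g.rFiber u) → ∀ c : Fin n → ℂ,
    0 ≤ (∑ i, ∑ j, conj (c i) * c j * F (g.mul (g.inv (x i)) (x j))).re ∧
    (∑ i, ∑ j, conj (c i) * c j * F (g.mul (g.inv (x i)) (x j))).im = 0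

/-- A function is locally `C₀` (in norm) : restriction to `𝒢(K)` vanishes at
infinity for every compact `K ⊆ 𝒢⁽⁰⁾`. -/
def IsLocallyC0 (g : EtaleGroupoid G) (F : G → ℂ) : Prop :=
  ∀ K : Set G, K ⊆ g.units → IsCompact K → ∀ ε : ℝ, 0 < ε →
    ∃ C : Set G, IsCompact C ∧ ∀ x : G, g.r x ∈ K → g.s x ∈ K → x ∉ C → ‖F x‖ < ε

/-- The Haagerup property for an étale groupoid. -/
def HaagerupProperty (g : EtaleGroupoid G) : Prop :=
  ∃ F : ℕ → G → ℂ, (∀ n, Continuous (F n)) ∧ (∀ n, g.IsPosDef (F n)) ∧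
    (∀ n, ∀ u ∈ g.units, F n u = 1) ∧
    (∀ K : Set G, IsCompact K → ∀ ε : ℝ, 0 < ε →
      ∃ N : ℕ, ∀ n : ℕ, N ≤ n → ∀ x ∈ K, ‖F n x - 1‖ < ε) ∧
    (∀ n, Continuous (F n) ∧ g.IsLocallyC0 (F n))

/-- The lower integral of `F` against the induced measure `ν`:
`∫ F dν = ∫_{𝒢⁽⁰⁾} Σ_{x ∈ 𝒢^u} F(x) dμ(u)`. -/
def fiberL (g : EtaleGroupoid G) (μ : Measure G) (F : G → ℝ≥0∞) : ℝ≥0∞ :=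
  ∫⁻ u, ∑' x : g.rFiber u, F (x : G) ∂μ

/-- The lower integral of `F` against `ν⁻¹` (source fibres). -/
def fiberLs (g : EtaleGroupoid G) (μ : Measure G) (F : G → ℝ≥0∞) : ℝ≥0∞ :=
  ∫⁻ u, ∑' x : g.sFiber u, F (x : G) ∂μ

/-- The induced measure `ν` of a set. -/
def nu (g : EtaleGroupoid G) (μ : Measure G) (E : Set G) : ℝ≥0∞ :=
  g.fiberL μ (E.indicator 1)

/-- `μ` is a quasi-invariant probability measure on the unit space: the induced
measure `ν` and its image `ν⁻¹` under inversion are mutually absolutely continuous. -/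
def IsQuasiInvariant (g : EtaleGroupoid G) (μ : Measure G) : Prop :=
  IsProbabilityMeasure μ ∧ μ g.unitsᶜ = 0 ∧
    ∀ E : Set G, MeasurableSet E → (g.nu μ E = 0 ↔ g.nu μ (g.inv ⁻¹' E) = 0)

/-- `μ` is an invariant probability measure on the unit space: `ν = ν⁻¹`. -/
def IsInvariant (g : EtaleGroupoid G) (μ : Measure G) : Prop :=
  IsProbabilityMeasure μ ∧ μ g.unitsᶜ = 0 ∧
    ∀ E : Set G, MeasurableSet E → g.nu μ E = g.nu μ (g.inv ⁻¹' E)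

/-- A modular function (Radon–Nikodym derivative `Δ = dν/dν⁻¹`), chosen to be a
Borel homomorphism. -/
structure IsModular (g : EtaleGroupoid G) (μ : Measure G) (Δ : G → ℝ) : Prop where
  meas : Measurable Δ
  pos : ∀ x, 0 < Δ x
  hom : ∀ x y, g.s x = g.r y → Δ (g.mul x y) = Δ x * Δ y
  inv_eq : ∀ x, Δ (g.inv x) = (Δ x)⁻¹
  rn : ∀ F : G → ℝ≥0∞, Measurable F →
    g.fiberL μ F = g.fiberLs μ fun x => F x * ENNReal.ofReal (Δ x)

end EtaleGroupoid

/-- A unitary representation of the groupoid on a Borel Hilbert bundle.  The fibres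
are realized as (closed) subspaces of an ambient Hilbert space `E`; `op x` is a
unitary `H(s x) → H(r x)`, the assignment is a Borel homomorphism (Borel-ness being
expressed through the matrix coefficients of a fundamental sequence of Borel
sections of the bundle). -/
structure GRep {G : Type} [TopologicalSpace G] [MeasurableSpace G] (g : EtaleGroupoid G)
    (E : Type) [NormedAddCommGroup E] [InnerProductSpace ℂ E] [MeasurableSpace E] where
  fib : G → Submodule ℂ E
  op : G → E → E
  mapsTo : ∀ x : G, ∀ v ∈ fib (g.s x), op x v ∈ fib (g.r x)
  map_add : ∀ x : G, ∀ v ∈ fib (g.s x), ∀ w ∈ fib (g.s x), op x (v + w) = op x v + op x w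
  map_smul : ∀ x : G, ∀ c : ℂ, ∀ v ∈ fib (g.s x), op x (c • v) = c • op x v
  inner_op : ∀ x : G, ∀ v ∈ fib (g.s x), ∀ w ∈ fib (g.s x),
    (inner ℂ (op x v) (op x w) : ℂ) = (inner ℂ v w : ℂ)
  surj' : ∀ x : G, ∀ w ∈ fib (g.r x), ∃ v ∈ fib (g.s x), op x v = w
  mul_op : ∀ x y : G, g.s x = g.r y → ∀ v ∈ fib (g.s y), op (g.mul x y) v = op x (op y v)
  unit_op : ∀ u ∈ g.units, ∀ v ∈ fib u, op u v = v
  fundSeq : ℕ → G → E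
  fundSeq_mem : ∀ n : ℕ, ∀ u ∈ g.units, fundSeq n u ∈ fib u
  fundSeq_meas : ∀ n : ℕ, Measurable (fundSeq n)
  fundSeq_dense : ∀ u ∈ g.units, ∀ v ∈ fib u, ∀ ε : ℝ, 0 < ε →
    ∃ w ∈ Submodule.span ℂ (Set.range fun n => fundSeq n u), ‖v - w‖ < ε
  fund_coeff_meas : ∀ n m : ℕ,
    Measurable fun x : G => (inner ℂ (fundSeq m (g.r x)) (op x (fundSeq n (g.s x))) : ℂ)

namespace GRep

variable {G : Type} [TopologicalSpace G] [MeasurableSpace G] {g : EtaleGroupoid G}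
variable {E : Type} [NormedAddCommGroup E] [InnerProductSpace ℂ E] [MeasurableSpace E]

/-- The matrix coefficient `x ↦ ⟨π(x) ξ(s x), η(r x)⟩` (linear in `ξ`). -/
def coeff (π : GRep g E) (ξ η : G → E) : G → ℂ :=
  fun x => (inner ℂ (η (g.r x)) (π.op x (ξ (g.s x))) : ℂ)

/-- A fundamental sequence of Borel sections of the bundle of `π`. -/
structure IsFundSeq (π : GRep g E) (f : ℕ → G → E) : Prop where
  mem : ∀ n : ℕ, ∀ u ∈ g.units, f n u ∈ π.fib u
  meas : ∀ n : ℕ, Measurable (f n)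
  dense : ∀ u ∈ g.units, ∀ v ∈ π.fib u, ∀ ε : ℝ, 0 < ε →
    ∃ w ∈ Submodule.span ℂ (Set.range fun n => f n u), ‖v - w‖ < ε
  coeff_meas : ∀ n m : ℕ, Measurable (π.coeff (f n) (f m))

/-- `π` is a `D`-representation: some fundamental sequence has all its matrix
coefficients in `D`. -/
def IsDRep (π : GRep g E) (D : Set (G → ℂ)) : Prop :=
  ∃ f : ℕ → G → E, π.IsFundSeq f ∧ ∀ n m : ℕ, π.coeff (f n) (f m) ∈ D

/-- A square-integrable Borel section of the bundle of `π`, i.e. a vector of the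
direct integral `∫^⊕ H_π(u) dμ(u)`. -/
structure IsL2Section (π : GRep g E) (μ : MeasureTheory.Measure G) (ξ : G → E) : Prop where
  mem : ∀ u ∈ g.units, ξ u ∈ π.fib u
  meas : Measurable ξ
  sq : MeasureTheory.Integrable (fun u => ‖ξ u‖ ^ 2) μ

/-- `⟨π_μ(f) ξ, η⟩ = ∫_𝒢 f(x) ⟨π(x)ξ(s x), η(r x)⟩ Δ(x)^{-1/2} dν(x)`, the
sesquilinear pairing of the integrated form of `π` w.r.t. `μ` (with modular
function `Δ`). -/
def pairing (π : GRep g E) (μ : MeasureTheory.Measure G) (Δ : G → ℝ) (f : G → ℂ)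
    (ξ η : G → E) : ℂ :=
  ∫ u, (∑' x : g.rFiber u,
    f (x : G) * ((Δ (x : G) ^ (-(1 / 2) : ℝ) : ℝ) : ℂ) * π.coeff ξ η (x : G)) ∂μ

/-- The operator norm `‖π_μ(f)‖` of the integrated form, expressed as the supremum
of the pairings over the unit ball of (the dense subspace of square-integrable
Borel sections of) the direct integral. -/
def intNorm (π : GRep g E) (μ : MeasureTheory.Measure G) (Δ : G → ℝ) (f : G → ℂ) : ℝ :=
  sSup {t : ℝ | ∃ ξ η : G → E, π.IsL2Section μ ξ ∧ π.IsL2Section μ η ∧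
    (∫ u, ‖ξ u‖ ^ 2 ∂μ) ≤ 1 ∧ (∫ u, ‖η u‖ ^ 2 ∂μ) ≤ 1 ∧
    t = ‖π.pairing μ Δ f ξ η‖}

end GRep

namespace EtaleGroupoid

variable {G : Type} [TopologicalSpace G] [MeasurableSpace G]

/-- The set of quasi-invariant probability measures on the unit space. -/
def QIMeasures (g : EtaleGroupoid G) : Set (MeasureTheory.Measure G) :=
  {μ | g.IsQuasiInvariant μ}

/-- The seminorm `‖f‖_{D,ℳ} = sup {‖π_μ(f)‖ : π a D-representation, μ ∈ ℳ}`. -/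
def DNorm (g : EtaleGroupoid G) (D : Set (G → ℂ)) (M : Set (MeasureTheory.Measure G))
    (f : G → ℂ) : ℝ :=
  sSup {t : ℝ | ∃ π : GRep g Hamb, π.IsDRep D ∧ ∃ μ ∈ M, ∃ Δ : G → ℝ,
    g.IsModular μ Δ ∧ t = π.intNorm μ Δ f}

/-- The full norm `‖f‖_max = sup {‖π_μ(f)‖ : π any representation, μ quasi-invariant}`. -/
def maxNorm (g : EtaleGroupoid G) (f : G → ℂ) : ℝ :=
  sSup {t : ℝ | ∃ π : GRep g Hamb, ∃ μ ∈ g.QIMeasures, ∃ Δ : G → ℝ,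
    g.IsModular μ Δ ∧ t = π.intNorm μ Δ f}

/-- `‖Ind(δ_u)(f)‖`: the norm of left convolution by `f` on `ℓ²(𝒢_u)`, expressed as a
supremum of pairings against finitely supported vectors in the unit ball. -/
def IndDeltaNorm (g : EtaleGroupoid G) (u : G) (f : G → ℂ) : ℝ :=
  sSup {t : ℝ | ∃ ξ η : G → ℂ,
    (Function.support ξ).Finite ∧ Function.support ξ ⊆ g.sFiber u ∧
    (Function.support η).Finite ∧ Function.support η ⊆ g.sFiber u ∧
    (∑' x : g.sFiber u, ‖ξ (x : G)‖ ^ 2) ≤ 1 ∧ (∑' x : g.sFiber u, ‖η (x : G)‖ ^ 2) ≤ 1 ∧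
    t = ‖∑' x : g.sFiber u, g.conv f ξ (x : G) * conj (η (x : G))‖}

/-- The reduced norm `‖f‖_r = sup_{u ∈ 𝒢⁽⁰⁾} ‖Ind(δ_u)(f)‖`. -/
def redNorm (g : EtaleGroupoid G) (f : G → ℂ) : ℝ :=
  sSup {t : ℝ | ∃ u ∈ g.units, t = g.IndDeltaNorm u f}

/-- `‖Ind(μ)(f)‖`: the norm of left convolution by `f` on `L²(𝒢, ν⁻¹)`, expressed as a
supremum of pairings against bounded compactly supported Borel functions in the unit
ball of `L²(𝒢, ν⁻¹)`. -/
def IndMuNorm (g : EtaleGroupoid G) (μ : MeasureTheory.Measure G) (f : G → ℂ) : ℝ :=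
  sSup {t : ℝ | ∃ ξ η : G → ℂ, Measurable ξ ∧ Measurable η ∧ BddFun ξ ∧ BddFun η ∧
    HasCompactSupport ξ ∧ HasCompactSupport η ∧
    (∫ u, (∑' x : g.sFiber u, ‖ξ (x : G)‖ ^ 2) ∂μ) ≤ 1 ∧
    (∫ u, (∑' x : g.sFiber u, ‖η (x : G)‖ ^ 2) ∂μ) ≤ 1 ∧
    t = ‖∫ u, (∑' x : g.sFiber u, g.conv f ξ (x : G) * conj (η (x : G))) ∂μ‖}

/-- The norm of `L²(𝒢, ν⁻¹)`. -/
def L2s (g : EtaleGroupoid G) (μ : MeasureTheory.Measure G) (h : G → ℂ) : ℝ :=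
  Real.sqrt (∫ u, (∑' x : g.sFiber u, ‖h (x : G)‖ ^ 2) ∂μ)

/-- Products of `n` elements of `S` (units for `n = 0`). -/
def Spow (g : EtaleGroupoid G) (S : Set G) : ℕ → Set G
  | 0 => g.units
  | n + 1 => {z | ∃ x ∈ S, ∃ y ∈ Spow g S n, g.s x = g.r y ∧ z = g.mul x y}

/-- The ball `∪_{k ≤ n} S^k`. -/
def ball (g : EtaleGroupoid G) (S : Set G) (n : ℕ) : Set G :=
  ⋃ k ∈ Finset.range (n + 1), g.Spow S k

/-- The length function `l_S(x) = min {n ≥ 0 : x ∈ ∪_{k ≤ n} S^k}`. -/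
def lS (g : EtaleGroupoid G) (S : Set G) (x : G) : ℕ := sInf {n : ℕ | x ∈ g.ball S n}

/-- The fibre Cayley-graph metric `d(x, y) = l_S (x⁻¹ y)` (as a real number). -/
def dS (g : EtaleGroupoid G) (S : Set G) (x y : G) : ℝ := (g.lS S (g.mul (g.inv x) y) : ℝ)

/-- `S` is a compact open symmetric generating set making all fibre Cayley graphs
`δ`-hyperbolic; i.e. `𝒢` is a hyperbolic groupoid (witnessed by `S` and `δ`). -/
structure IsHyperbolicGen (g : EtaleGroupoid G) (S : Set G) (δ : ℝ) : Prop where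
  compact : IsCompact S
  isOpen : IsOpen S
  symm : ∀ x ∈ S, g.inv x ∈ S
  gen : ∀ x : G, ∃ n : ℕ, 1 ≤ n ∧ x ∈ g.Spow S n
  delta_pos : 0 < δ
  hyp : ∀ u ∈ g.units, ∀ a ∈ g.rFiber u, ∀ b ∈ g.rFiber u, ∀ c ∈ g.rFiber u,
    ∀ d ∈ g.rFiber u,
      g.dS S a b + g.dS S c d ≤ max (g.dS S a c + g.dS S b d) (g.dS S a d + g.dS S b c) + δ

/-- The ideal `ℒ^p_μ(𝒢)` of bounded Borel functions which are `p`-integrable for the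
induced measure `ν`. -/
def LpIdeal (g : EtaleGroupoid G) (μ : MeasureTheory.Measure G) (p : ℝ) : Set (G → ℂ) :=
  {f | Measurable f ∧ BddFun f ∧
    g.fiberL μ (fun x => ENNReal.ofReal (‖f x‖ ^ p)) ≠ ⊤}

/-- The `ℒ^p_μ`-seminorm `|f|_p`. -/
def lpSeminorm (g : EtaleGroupoid G) (μ : MeasureTheory.Measure G) (p : ℝ) (f : G → ℂ) : ℝ :=
  ((g.fiberL μ fun x => ENNReal.ofReal (‖f x‖ ^ p)).toReal) ^ (1 / p)

/-- `‖f‖_{ℒ^p_μ(𝒢), μ}`: the supremum of `‖π_μ(f)‖` over all `ℒ^p_μ(𝒢)`-representations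
(for an invariant `μ`, so `Δ ≡ 1`). -/
def LpDNorm (g : EtaleGroupoid G) (μ : MeasureTheory.Measure G) (p : ℝ) (f : G → ℂ) : ℝ :=
  sSup {t : ℝ | ∃ π : GRep g Hamb, π.IsDRep (g.LpIdeal μ p) ∧
    t = π.intNorm μ (fun _ => 1) f}

end EtaleGroupoid

/-!
For `ξ, η ∈ C_c(𝒢)` the coefficient `Σ_{y,z ∈ 𝒢^{r x}} ξ(x⁻¹z) conj(η y) F(y⁻¹z)` only involves
`y ∈ supp η` and `x⁻¹z ∈ supp ξ`. Since `𝒢` is étale, a compact set meets every `r`-fibre in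
uniformly boundedly many points, so the coefficient is bounded by a constant times the supremum
of `|F(y⁻¹z)|` over the contributing pairs. These `y⁻¹z` have range and source in the compact
set `s(supp η) ∪ s(supp ξ)` of units, and leave any compact `C` once `x` leaves
`supp η · C · (supp ξ)⁻¹`; hence local vanishing at infinity passes from `F` to the coefficient.
The convolution formula is a swap of two finitely supported sums.
-/

lemma norm_tsum_le_of_encard_support_le {α E : Type*} [SeminormedAddCommGroup E] {f : α → E}
    {N : ℕ} {c : ℝ} (hN : (Function.support f).encard ≤ N)
    (hc : ∀ a ∈ Function.support f, ‖f a‖ ≤ c) (hc0 : 0 ≤ c) : ‖∑' a, f a‖ ≤ N * c := by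
  have hfin := Set.finite_of_encard_le_coe hN
  have hcard : (hfin.toFinset.card : ℝ) ≤ N := by
    rw [hfin.encard_eq_coe_toFinset_card] at hN
    exact_mod_cast hN
  rw [tsum_eq_sum (s := hfin.toFinset) (by simp)]
  calc ‖∑ a ∈ hfin.toFinset, f a‖ ≤ ∑ a ∈ hfin.toFinset, ‖f a‖ := norm_sum_le _ _
    _ ≤ hfin.toFinset.card * c := by
        simpa using Finset.sum_le_card_nsmul _ _ c fun a ha => hc a (by simpa using ha)
    _ ≤ N * c := mul_le_mul_of_nonneg_right hcard hc0

namespace EtaleGroupoid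

variable {G : Type} [TopologicalSpace G] (g : EtaleGroupoid G)

lemma r_inv (x : G) : g.r (g.inv x) = g.s x := by
  rw [← g.s_inv, g.inv_inv]

lemma s_mem_units (x : G) : g.s x ∈ g.units := ⟨g.inv x, g.r_inv x⟩

lemma mul_s (x : G) : g.mul x (g.s x) = x := by
  simpa only [g.inv_inv, ← g.s_def] using g.inv_mul_cancel' (g.inv x) x (by rw [g.s_inv])

variable {g}

lemma mul_inv_mul {x w : G} (h : g.r w = g.r x) : g.mul x (g.mul (g.inv x) w) = w := by
  simpa only [g.inv_inv] using g.inv_mul_cancel' (g.inv x) w (by rw [g.s_inv, h])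

lemma r_inv_mul {x w : G} (h : g.r w = g.r x) : g.r (g.mul (g.inv x) w) = g.s x := by
  rw [g.r_mul _ _ (by rw [g.s_inv, h]), g.r_inv]

lemma s_inv_mul {x w : G} (h : g.r w = g.r x) : g.s (g.mul (g.inv x) w) = g.s w :=
  g.s_mul _ _ (by rw [g.s_inv, h])

lemma eq_inv_of_mul_eq_r {a b : G} (hab : g.s a = g.r b) (h : g.mul a b = g.r a) :
    b = g.inv a :=
  calc b = g.mul (g.inv a) (g.mul a b) := (g.inv_mul_cancel' a b hab).symm
    _ = g.inv a := by rw [h, ← g.s_inv, g.mul_s]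

lemma inv_inv_mul {x y : G} (h : g.r y = g.r x) :
    g.inv (g.mul (g.inv x) y) = g.mul (g.inv y) x := by
  refine (eq_inv_of_mul_eq_r (by rw [s_inv_mul h, r_inv_mul h.symm]) ?_).symm
  rw [g.mul_assoc' _ _ _ (by rw [g.s_inv, h]) (r_inv_mul h.symm).symm, mul_inv_mul h.symm,
    r_inv_mul h, g.s_def]

lemma continuousOn_mul :
    ContinuousOn (fun p : G × G => g.mul p.1 p.2) {p | g.s p.1 = g.r p.2} := by
  intro p hp
  rw [ContinuousWithinAt, (nhds_basis_opens _).tendsto_right_iff]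
  rintro W ⟨hpW, hW⟩
  obtain ⟨U, V, hU, hV, hpU, hpV, hUV⟩ := g.continuous_mul p.1 p.2 hp W hW hpW
  filter_upwards [mem_nhdsWithin_of_mem_nhds ((hU.prod hV).mem_nhds ⟨hpU, hpV⟩),
    self_mem_nhdsWithin] with q hq hq'
  exact hUV q.1 hq.1 q.2 hq.2 hq'

variable (g)

def setMul (A B : Set G) : Set G :=
  (fun p : G × G => g.mul p.1 p.2) '' (A ×ˢ B ∩ {p | g.s p.1 = g.r p.2})

variable {g}

lemma mul_mem_setMul {A B : Set G} {a b : G} (ha : a ∈ A) (hb : b ∈ B) (hab : g.s a = g.r b) :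
    g.mul a b ∈ g.setMul A B :=
  ⟨(a, b), ⟨⟨ha, hb⟩, hab⟩, rfl⟩

lemma isCompact_setMul [T2Space G] {A B : Set G} (hA : IsCompact A) (hB : IsCompact B) :
    IsCompact (g.setMul A B) :=
  ((hA.prod hB).inter_right (isClosed_eq (g.continuous_s.comp continuous_fst)
    (g.continuous_r.comp continuous_snd))).image_of_continuousOn
    (continuousOn_mul.mono Set.inter_subset_right)

lemma exists_encard_inter_rFiber_le {K : Set G} (hK : IsCompact K) :
    ∃ N : ℕ, ∀ v, (K ∩ g.rFiber v).encard ≤ N := by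
  choose U hU hxU hinj _ using g.etale
  obtain ⟨t, -, hcov⟩ := hK.elim_nhds_subcover U fun x _ => (hU x).mem_nhds (hxU x)
  refine ⟨t.card, fun v => ?_⟩
  calc (K ∩ g.rFiber v).encard ≤ (⋃ x ∈ t, U x ∩ g.rFiber v).encard := by
        refine Set.encard_le_encard fun w hw => ?_
        obtain ⟨x, hx, hwx⟩ := Set.mem_iUnion₂.mp (hcov hw.1)
        exact Set.mem_biUnion hx ⟨hwx, hw.2⟩
    _ ≤ ∑ x ∈ t, (U x ∩ g.rFiber v).encard := t.set_encard_biUnion_le _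
    _ ≤ ∑ _x ∈ t, 1 := Finset.sum_le_sum fun x _ => Set.encard_le_one_iff.mpr
        fun a b ha hb => hinj x ha.1 hb.1 (ha.2.trans hb.2.symm)
    _ = t.card := by simp

lemma encard_support_comp_le {ι : Type*} {φ : ι → G} (hφ : φ.Injective) {v : G}
    (hv : ∀ i, g.r (φ i) = v) {q : G → ℂ} {N : ℕ}
    (hN : ∀ v, (tsupport q ∩ g.rFiber v).encard ≤ N) :
    (Function.support fun i => q (φ i)).encard ≤ N :=
  calc (Function.support fun i => q (φ i)).encard
        = (φ '' Function.support fun i => q (φ i)).encard := (hφ.encard_image _).symm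
    _ ≤ (tsupport q ∩ g.rFiber v).encard := by
        refine Set.encard_le_encard ?_
        rintro _ ⟨i, hi, rfl⟩
        exact ⟨subset_tsupport _ hi, hv i⟩
    _ ≤ N := hN v

lemma finite_support_comp {ι : Type*} {φ : ι → G} (hφ : φ.Injective) {v : G}
    (hv : ∀ i, g.r (φ i) = v) {q : G → ℂ} (hq : HasCompactSupport q) :
    (Function.support fun i => q (φ i)).Finite := by
  obtain ⟨N, hN⟩ := exists_encard_inter_rFiber_le hq
  exact Set.finite_of_encard_le_coe (encard_support_comp_le hφ hv hN)

lemma injective_inv_mul (x : G) : (fun z : g.rFiber (g.r x) => g.mul (g.inv x) z).Injective :=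
  fun z w h => Subtype.ext <| by
    simpa only [mul_inv_mul z.2, mul_inv_mul w.2] using congrArg (g.mul x) h

variable (g)

def gnsCoeff (F ξ η : G → ℂ) (x : G) : ℂ :=
  ∑' y : g.rFiber (g.r x), ∑' z : g.rFiber (g.r x),
    ξ (g.mul (g.inv x) z) * conj (η y) * F (g.mul (g.inv y) z)

variable {g}

lemma gnsCoeff_eq_conv {F ξ η : G → ℂ} (hξ : HasCompactSupport ξ) (hη : HasCompactSupport η) :
    g.gnsCoeff F ξ η =
      g.conv (g.conv (fun y => conj (η y)) F) (fun z => conj (g.star' ξ z)) := by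
  funext x
  set T : g.rFiber (g.r x) → g.rFiber (g.r x) → ℂ := fun y z =>
    ξ (g.mul (g.inv x) z) * conj (η y) * F (g.mul (g.inv y) z)
  have hT : (Function.support (Function.uncurry T)).Finite := by
    refine ((finite_support_comp Subtype.val_injective (fun y => y.2) hη).prod
      (finite_support_comp (injective_inv_mul x) (fun z => r_inv_mul z.2) hξ)).subset ?_
    rintro ⟨y, z⟩ h
    exact ⟨fun h0 => h (by simp [T, h0]), fun h0 => h (by simp [T, h0])⟩
  have hinner : ∀ z : g.rFiber (g.r x), g.conv (fun y => conj (η y)) F z *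
      conj (g.star' ξ (g.mul (g.inv z) x)) = ∑' y, T y z := by
    rintro ⟨z, hz⟩
    simp only [conv, star', Complex.conj_conj, inv_inv_mul hz.symm, ← tsum_mul_right]
    rw [hz]
    exact tsum_congr fun y => by ring
  rw [conv, tsum_congr hinner, (summable_of_hasFiniteSupport hT).tsum_comm]
  rfl

lemma exists_norm_gnsCoeff_le {ξ η : G → ℂ} (hξb : BddFun ξ) (hξ : HasCompactSupport ξ)
    (hηb : BddFun η) (hη : HasCompactSupport η) :
    ∃ D : ℝ, 0 ≤ D ∧ ∀ (F : G → ℂ) (x : G) (c : ℝ), 0 ≤ c →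
      (∀ y z, g.r y = g.r x → g.r z = g.r x → ξ (g.mul (g.inv x) z) ≠ 0 → η y ≠ 0 →
        ‖F (g.mul (g.inv y) z)‖ ≤ c) →
      ‖g.gnsCoeff F ξ η x‖ ≤ D * c := by
  obtain ⟨Mξ, hMξ⟩ := hξb
  obtain ⟨Mη, hMη⟩ := hηb
  obtain ⟨Nξ, hNξ⟩ := exists_encard_inter_rFiber_le hξ
  obtain ⟨Nη, hNη⟩ := exists_encard_inter_rFiber_le hη
  refine ⟨Nη * (Nξ * (max Mξ 0 * max Mη 0)), by positivity, fun F x c hc0 hF => ?_⟩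
  have hterm : ∀ y z : g.rFiber (g.r x), ξ (g.mul (g.inv x) z) ≠ 0 → η y ≠ 0 →
      ‖ξ (g.mul (g.inv x) z) * conj (η y) * F (g.mul (g.inv y) z)‖ ≤
        max Mξ 0 * max Mη 0 * c := by
    intro y z hz hy
    rw [norm_mul, norm_mul, Complex.norm_conj]
    gcongr
    exacts [(hMξ _).trans (le_max_left _ _), (hMη _).trans (le_max_left _ _),
      hF y z y.2 z.2 hz hy]
  calc ‖g.gnsCoeff F ξ η x‖ ≤ Nη * (Nξ * (max Mξ 0 * max Mη 0 * c)) := by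
        refine norm_tsum_le_of_encard_support_le ?_ (fun y hy => ?_) (by positivity)
        · refine (Set.encard_le_encard fun y hy => ?_).trans
            (encard_support_comp_le Subtype.val_injective (fun y => y.2) hNη)
          exact fun h0 => hy (by simp [h0])
        · have hy0 : η y ≠ 0 := fun h0 => hy (by simp [h0])
          refine norm_tsum_le_of_encard_support_le ?_ (fun z hz => ?_) (by positivity)
          · refine (Set.encard_le_encard fun z hz => ?_).trans
              (encard_support_comp_le (injective_inv_mul x) (fun z => r_inv_mul z.2) hNξ)
            exact fun h0 => hz (by simp [h0])
          · exact hterm y z (fun h0 => hz (by simp [h0])) hy0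
    _ = Nη * (Nξ * (max Mξ 0 * max Mη 0)) * c := by ring

lemma bddFun_gnsCoeff {F ξ η : G → ℂ} (hF : BddFun F) (hξb : BddFun ξ)
    (hξ : HasCompactSupport ξ) (hηb : BddFun η) (hη : HasCompactSupport η) :
    BddFun (g.gnsCoeff F ξ η) := by
  obtain ⟨D, -, hD⟩ := exists_norm_gnsCoeff_le hξb hξ hηb hη
  obtain ⟨M, hM⟩ := hF
  exact ⟨D * max M 0, fun x => hD F x _ (le_max_right _ _)
    fun _ _ _ _ _ _ => (hM _).trans (le_max_left _ _)⟩

lemma isLocallyC0_gnsCoeff [T2Space G] {F ξ η : G → ℂ} (hF : g.IsLocallyC0 F)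
    (hξb : BddFun ξ) (hξ : HasCompactSupport ξ) (hηb : BddFun η) (hη : HasCompactSupport η) :
    g.IsLocallyC0 (g.gnsCoeff F ξ η) := by
  intro _ _ _ ε hε
  obtain ⟨D, hD0, hD⟩ := exists_norm_gnsCoeff_le hξb hξ hηb hη
  obtain ⟨C, hC, hFC⟩ := hF (g.s '' tsupport η ∪ g.s '' tsupport ξ)
    (by rintro _ (⟨a, -, rfl⟩ | ⟨a, -, rfl⟩) <;> exact g.s_mem_units a)
    ((hη.image g.continuous_s).union (hξ.image g.continuous_s)) (ε / (D + 1)) (by positivity)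
  refine ⟨g.setMul (g.setMul (tsupport η) C) (g.inv '' tsupport ξ),
    isCompact_setMul (isCompact_setMul hη hC) (hξ.image g.continuous_inv), fun x _ _ hx => ?_⟩
  refine (hD F x (ε / (D + 1)) (by positivity) fun y z hy hz hξz hηy => ?_).trans_lt ?_
  · have hyz : g.r z = g.r y := hz.trans hy.symm
    -- `x = y (y⁻¹z) (x⁻¹z)⁻¹`, so `y⁻¹z ∈ C` would put `x` in the excluded compact set
    refine (hFC _ (.inl ⟨y, subset_tsupport _ hηy, (r_inv_mul hyz).symm⟩)
      (.inr ⟨_, subset_tsupport _ hξz, by rw [s_inv_mul hz, s_inv_mul hyz]⟩) fun hw => hx ?_).le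
    have hxC := mul_mem_setMul (mul_mem_setMul (subset_tsupport _ hηy) hw (r_inv_mul hyz).symm)
      (Set.mem_image_of_mem g.inv (subset_tsupport _ hξz))
      (by rw [mul_inv_mul hyz, inv_inv_mul hz, r_inv_mul hz.symm])
    rwa [mul_inv_mul hyz, inv_inv_mul hz, mul_inv_mul hz.symm] at hxC
  · rw [← mul_div_assoc, div_lt_iff₀ (by positivity)]
    nlinarith

lemma gnsCoeff_mem_B0l [T2Space G] [MeasurableSpace G] {F ξ η : G → ℂ} (hF : F ∈ g.B0l)
    (hmeas : Measurable (g.gnsCoeff F ξ η)) (hξ : g.IsCc ξ) (hη : g.IsCc η) :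
    g.gnsCoeff F ξ η ∈ g.B0l :=
  have hξb : BddFun ξ := hξ.2.exists_bound_of_continuous hξ.1
  have hηb : BddFun η := hη.2.exists_bound_of_continuous hη.1
  ⟨hmeas, bddFun_gnsCoeff hF.2.1 hξb hξ.2 hηb hη.2, isLocallyC0_gnsCoeff hF.2.2 hξb hξ.2 hηb hη.2⟩

end EtaleGroupoid

section Statements

variable {G : Type} [TopologicalSpace G] [T2Space G] [SecondCountableTopology G]
  [LocallyCompactSpace G] [MeasurableSpace G] [BorelSpace G]

theorem gns_of_B0l_posdef_is_B0l_rep_general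
    (g : EtaleGroupoid G) (F : G → ℂ)
    (hF : F ∈ g.B0l)
    (E : Type) [NormedAddCommGroup E] [InnerProductSpace ℂ E] [MeasurableSpace E]
    (π : GRep g E)
    (fs : ℕ → G → ℂ) (hfs : ∀ n, g.IsCc (fs n))
    (σ : ℕ → G → E) (hσ : π.IsFundSeq σ)
    (hcoeff : ∀ n m : ℕ, π.coeff (σ n) (σ m) = fun x : G =>
      ∑' y : g.rFiber (g.r x), ∑' z : g.rFiber (g.r x),
        fs n (g.mul (g.inv x) (z : G)) * conj (fs m (y : G)) *
          F (g.mul (g.inv (y : G)) (z : G))) :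
    π.IsDRep g.B0l ∧
    ∀ n m : ℕ,
      π.coeff (σ n) (σ m) =
        g.conv (g.conv (fun y => conj (fs m y)) F) (fun z => conj (g.star' (fs n) z)) ∧
      π.coeff (σ n) (σ m) ∈ g.B0l := by
  have hgns : ∀ n m, π.coeff (σ n) (σ m) = g.gnsCoeff F (fs n) (fs m) := hcoeff
  have hmem : ∀ n m, π.coeff (σ n) (σ m) ∈ g.B0l := fun n m => by
    rw [hgns]
    exact EtaleGroupoid.gnsCoeff_mem_B0l hF (hgns n m ▸ hσ.coeff_meas n m) (hfs n) (hfs m)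
  exact ⟨⟨σ, hσ, hmem⟩, fun n m =>
    ⟨(hgns n m).trans (EtaleGroupoid.gnsCoeff_eq_conv (hfs n).2 (hfs m).2), hmem n m⟩⟩

/-- Let `F` be a continuous positive definite function on `𝒢` with
`F ∈ B_{0,l}(𝒢)`, and let `π` be (a realization of) the GNS representation of `F`:
it carries a fundamental sequence `σ(f_n)` given by restrictions of a sup-norm dense
sequence `{f_n} ⊆ C_c(𝒢)` whose matrix coefficients are
`⟨π_F(x) σ(f_n)(s x), σ(f_m)(r x)⟩ = Σ_{y,z ∈ 𝒢^{r x}} f_n(x⁻¹z) conj(f_m(y)) F(y⁻¹z)`.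
Then `π` is a `B_{0,l}(𝒢)`-representation; in fact each such matrix coefficient equals
`(conj f_m * F) * (conj (f_n*))` and lies in `B_{0,l}(𝒢)`. -/
theorem gns_of_B0l_posdef_is_B0l_rep
    (g : EtaleGroupoid G) (F : G → ℂ) (hFcont : Continuous F) (hFpd : g.IsPosDef F)
    (hF : F ∈ g.B0l)
    (E : Type) [NormedAddCommGroup E] [InnerProductSpace ℂ E] [MeasurableSpace E]
    (π : GRep g E)
    (fs : ℕ → G → ℂ) (hfs : ∀ n, g.IsCc (fs n))
    (hdense : ∀ h : G → ℂ, g.IsCc h → ∀ ε : ℝ, 0 < ε → ∃ n, ∀ x : G, ‖h x - fs n x‖ < ε)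
    (σ : ℕ → G → E) (hσ : π.IsFundSeq σ)
    (hcoeff : ∀ n m : ℕ, π.coeff (σ n) (σ m) = fun x : G =>
      ∑' y : g.rFiber (g.r x), ∑' z : g.rFiber (g.r x),
        fs n (g.mul (g.inv x) (z : G)) * conj (fs m (y : G)) *
          F (g.mul (g.inv (y : G)) (z : G))) :
    π.IsDRep g.B0l ∧
    ∀ n m : ℕ,
      π.coeff (σ n) (σ m) =
        g.conv (g.conv (fun y => conj (fs m y)) F) (fun z => conj (g.star' (fs n) z)) ∧
      π.coeff (σ n) (σ m) ∈ g.B0l :=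
  gns_of_B0l_posdef_is_B0l_rep_general g F hF E π fs hfs σ hσ hcoeff

end Statements
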